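/- Fix an integer N ≥ 2, the imaginary unit i, and parameters λ_{N,1},…,λ_{N,N} ∈ ℂ (the top row). Points of ℂ^{N(N−1)/2} are written as triangular arrays λ = (λ_{nj})_{1≤j≤n≤N−1}; e_{nj} denotes the corresponding standard basis vector, and λ_{N,m} always refers to the fixed parameters. For f : ℂ^{N(N−1)/2} → ℂ define the Gelfand–Zetlin operators: (E_{nn}f)(λ) = −i·(∑_{j=1}^{n} λ_{nj} − ∑_{j=1}^{n−1} λ_{n−1,j})·f(λ) for 1 ≤ n ≤ N; for 1 ≤ n ≤ N−1, (E_{n,n+1}f)(λ) = −i·∑_{j=1}^{n} [∏_{r=1}^{n+1}(λ_{nj} − λ_{n+1,r} − i/2) / ∏_{s≤n, s≠j}(λ_{nj} − λ_{ns})]·f(λ − i·e_{nj}) and (E_{n+1,n}f)(λ) = −i·∑_{j=1}^{n} [∏_{r=1}^{n−1}(λ_{nj} − λ_{n−1,r} + i/2) / ∏_{s≤n, s≠j}(λ_{nj} − λ_{ns})]·f(λ + i·e_{nj}) (empty products equal 1). Then for all n ∈ {1,…,N}, m ∈ {1,…,N−1}, every function f, and every λ whose row-m entries are pairwise distinct: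 ((E_{nn}∘E_{m,m+1} − E_{m,m+1}∘E_{nn}) f)(λ) = (δ_{nm} − δ_{n,m+1})·(E_{m,m+1} f)(λ), and ((E_{nn}∘E_{m+1,m} − E_{m+1,m}∘E_{nn}) f)(λ) = −(δ_{nm} − δ_{n,m+1})·(E_{m+1,m} f)(λ). -/

import Mathlib

noncomputable section

open Finset

/-- Update a triangular array of complex numbers at position `(n, j)`. -/
def upd (lam : ℕ → ℕ → ℂ) (n j : ℕ) (c : ℂ) : ℕ → ℕ → ℂ :=
  Function.update lam n (Function.update (lam n) j c)

/-- Entry `λ_{n,j}` of a triangular array, where row `N` is given by the fixed top-row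
parameters `Λ`. -/
def ent (N : ℕ) (Λ : ℕ → ℂ) (lam : ℕ → ℕ → ℂ) (n j : ℕ) : ℂ :=
  if n = N then Λ j else lam n j

/-- Gelfand–Zetlin Cartan generator `E_{nn}`. -/
def Ediag (N : ℕ) (Λ : ℕ → ℂ) (n : ℕ) (f : (ℕ → ℕ → ℂ) → ℂ) (lam : ℕ → ℕ → ℂ) : ℂ :=
  -Complex.I * ((∑ j ∈ Icc 1 n, ent N Λ lam n j) - ∑ j ∈ Icc 1 (n - 1), ent N Λ lam (n - 1) j)
    * f lam

/-- Gelfand–Zetlin raising generator `E_{n,n+1}`. -/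
def Eup (N : ℕ) (Λ : ℕ → ℂ) (n : ℕ) (f : (ℕ → ℕ → ℂ) → ℂ) (lam : ℕ → ℕ → ℂ) : ℂ :=
  -Complex.I * ∑ j ∈ Icc 1 n,
    (∏ r ∈ Icc 1 (n + 1), (lam n j - ent N Λ lam (n + 1) r - Complex.I / 2)) /
        (∏ s ∈ (Icc 1 n).erase j, (lam n j - lam n s)) *
      f (upd lam n j (lam n j - Complex.I))

/-- Gelfand–Zetlin lowering generator `E_{n+1,n}`. -/
def Elow (n : ℕ) (f : (ℕ → ℕ → ℂ) → ℂ) (lam : ℕ → ℕ → ℂ) : ℂ :=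
  -Complex.I * ∑ j ∈ Icc 1 n,
    (∏ r ∈ Icc 1 (n - 1), (lam n j - lam (n - 1) r + Complex.I / 2)) /
        (∏ s ∈ (Icc 1 n).erase j, (lam n j - lam n s)) *
      f (upd lam n j (lam n j + Complex.I))

/-!
`E_{nn}` multiplies by `-i·D_n(λ)`, where `D_n` is the sum of row `n` minus the sum of row
`n - 1`. The operators `E_{m,m+1}` and `E_{m+1,m}` are combinations of shifts of a single
entry `λ_{mj}` of row `m < N` by `∓i`, and every such shift changes `D_n` by the same amount
`∓i·(δ_{nm} − δ_{n,m+1})`, whatever `j` is. Hence `E_{nn}` commutes past them up to that scalar.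
-/

/-- The pairing `δ_{nm} − δ_{n,m+1}` of `ε_n` with the simple root `α_m`. -/
def simpleRootCoeff (n m : ℕ) : ℂ :=
  (if n = m then 1 else 0) - if n = m + 1 then 1 else 0

def rowSumDiff (N : ℕ) (Λ : ℕ → ℂ) (n : ℕ) (lam : ℕ → ℕ → ℂ) : ℂ :=
  (∑ j ∈ Icc 1 n, ent N Λ lam n j) - ∑ j ∈ Icc 1 (n - 1), ent N Λ lam (n - 1) j

theorem Ediag_apply (N : ℕ) (Λ : ℕ → ℂ) (n : ℕ) (g : (ℕ → ℕ → ℂ) → ℂ) (lam : ℕ → ℕ → ℂ) :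
    Ediag N Λ n g lam = -Complex.I * rowSumDiff N Λ n lam * g lam :=
  rfl

section Update

variable (N : ℕ) (Λ : ℕ → ℂ) (lam : ℕ → ℕ → ℂ) {m : ℕ} (j : ℕ) (c : ℂ)

theorem ent_upd (hm : m ≠ N) (k r : ℕ) :
    ent N Λ (upd lam m j c) k r = if k = m ∧ r = j then c else ent N Λ lam k r := by
  unfold ent upd
  by_cases hkN : k = N
  · subst hkN
    simp [Ne.symm hm]
  · by_cases hkm : k = m <;> by_cases hrj : r = j <;> simp_all

theorem sum_ent_upd_of_ne (hm : m ≠ N) {k : ℕ} (hk : k ≠ m) (s : Finset ℕ) :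
    ∑ r ∈ s, ent N Λ (upd lam m j c) k r = ∑ r ∈ s, ent N Λ lam k r :=
  sum_congr rfl fun r _ => by simp [ent_upd N Λ lam j c hm, hk]

theorem sum_ent_upd_self (hm : m ≠ N) (hj : j ∈ Icc 1 m) :
    ∑ r ∈ Icc 1 m, ent N Λ (upd lam m j c) m r
      = (∑ r ∈ Icc 1 m, ent N Λ lam m r) + (c - lam m j) := by
  have hterm : ∀ r ∈ Icc 1 m, ent N Λ (upd lam m j c) m r
      = ent N Λ lam m r + if r = j then c - lam m j else 0 := by
    intro r _
    rw [ent_upd N Λ lam j c hm]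
    by_cases hrj : r = j <;> simp [ent, hrj, hm]
  rw [sum_congr rfl hterm, sum_add_distrib, sum_ite_eq' _ j, if_pos hj]

theorem rowSumDiff_upd (n : ℕ) (hm : m ≠ N) (hj : j ∈ Icc 1 m) :
    rowSumDiff N Λ n (upd lam m j c)
      = rowSumDiff N Λ n lam + simpleRootCoeff n m * (c - lam m j) := by
  have hm1 : 1 ≤ m := (mem_Icc.1 hj).1.trans (mem_Icc.1 hj).2
  unfold rowSumDiff simpleRootCoeff
  by_cases hnm : n = m
  · subst hnm
    rw [sum_ent_upd_self N Λ lam j c hm hj, sum_ent_upd_of_ne N Λ lam j c hm (by omega)]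
    simp only [if_true, if_neg (Nat.succ_ne_self n).symm]
    ring
  by_cases hnm' : n = m + 1
  · subst hnm'
    rw [sum_ent_upd_of_ne N Λ lam j c hm (by omega), Nat.add_sub_cancel,
      sum_ent_upd_self N Λ lam j c hm hj]
    simp only [if_neg hnm, if_true]
    ring
  · rw [sum_ent_upd_of_ne N Λ lam j c hm hnm, sum_ent_upd_of_ne N Λ lam j c hm (by omega)]
    simp [hnm, hnm']

end Update

section Commutation

variable (N : ℕ) (Λ : ℕ → ℂ) (n : ℕ) {m : ℕ} (f : (ℕ → ℕ → ℂ) → ℂ) (lam : ℕ → ℕ → ℂ)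

theorem Eup_Ediag (hm : m ≤ N - 1) :
    Eup N Λ m (Ediag N Λ n f) lam
      = (-Complex.I * rowSumDiff N Λ n lam - simpleRootCoeff n m) * Eup N Λ m f lam := by
  simp only [Eup]
  rw [mul_left_comm _ (-Complex.I)]
  congr 1
  rw [mul_sum]
  refine sum_congr rfl fun j hj => ?_
  have hshift : -Complex.I * rowSumDiff N Λ n (upd lam m j (lam m j - Complex.I))
      = -Complex.I * rowSumDiff N Λ n lam - simpleRootCoeff n m := by
    rw [rowSumDiff_upd N Λ lam j _ n (by grind) hj]
    linear_combination simpleRootCoeff n m * Complex.I_sq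
  rw [Ediag_apply, hshift]
  ring

theorem Elow_Ediag (hm : m ≤ N - 1) :
    Elow m (Ediag N Λ n f) lam
      = (-Complex.I * rowSumDiff N Λ n lam + simpleRootCoeff n m) * Elow m f lam := by
  simp only [Elow]
  rw [mul_left_comm _ (-Complex.I)]
  congr 1
  rw [mul_sum]
  refine sum_congr rfl fun j hj => ?_
  have hshift : -Complex.I * rowSumDiff N Λ n (upd lam m j (lam m j + Complex.I))
      = -Complex.I * rowSumDiff N Λ n lam + simpleRootCoeff n m := by
    rw [rowSumDiff_upd N Λ lam j _ n (by grind) hj]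
    linear_combination -simpleRootCoeff n m * Complex.I_sq
  rw [Ediag_apply, hshift]
  ring

end Commutation

theorem gz_cartan_chevalley_relations
    (N : ℕ) (Λ : ℕ → ℂ) (n m : ℕ)
    (hm2 : m ≤ N - 1)
    (f : (ℕ → ℕ → ℂ) → ℂ) (lam : ℕ → ℕ → ℂ) :
    (Ediag N Λ n (Eup N Λ m f) lam - Eup N Λ m (Ediag N Λ n f) lam =
      ((if n = m then 1 else 0) - if n = m + 1 then 1 else 0) * Eup N Λ m f lam) ∧
    (Ediag N Λ n (Elow m f) lam - Elow m (Ediag N Λ n f) lam =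
      -((if n = m then 1 else 0) - if n = m + 1 then 1 else 0) * Elow m f lam) := by
  rw [Ediag_apply, Ediag_apply, Eup_Ediag N Λ n f lam hm2, Elow_Ediag N Λ n f lam hm2]
  unfold simpleRootCoeff
  constructor <;> ring
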